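/- Let (X, ◃) be a finite rack whose structure group G_{(X,◃)} is torsion-free. Then G_{(X,◃)} is free abelian, and consequently for all x, y ∈ X one has ι(x) = ι(x ◃ y) in G_{(X,◃)}, where ι : X → G_{(X,◃)} is the canonical map. -/

import Mathlib

/-!
The right translations `x ↦ x ◃ y` generate an action of the structure group `G` on `X` with
`g ι(x) g⁻¹ = ι(g • x)`; since `X` is finite, the kernel of this action is a central subgroup of
finite index. For `n` the index of the centre, the transfer makes `g ↦ gⁿ` a homomorphism into
the (abelian) centre, so `⁅a, b⁆ⁿ = ⁅aⁿ, bⁿ⁆ = 1`; in a torsion-free group every commutator is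
therefore trivial. A finitely generated torsion-free abelian group is free abelian, and in an
abelian `G` the relation `ι x ι y = ι y ι(x ◃ y)` cancels to `ι x = ι(x ◃ y)`.
-/

/-- The defining relations of the structure group of a rack:
`x y = y (x ◃ y)` for all `x, y`. -/
def rackRels {X : Type*} (op : X → X → X) : Set (FreeGroup X) :=
  {w | ∃ x y, w = FreeGroup.of x * FreeGroup.of y *
    (FreeGroup.of y * FreeGroup.of (op x y))⁻¹}

/-- The structure group of a rack `(X, ◃)`. -/
abbrev RackGroup {X : Type*} (op : X → X → X) : Type _ :=
  PresentedGroup (rackRels op)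

open Subgroup
open scoped commutatorElement

theorem mul_comm_of_finiteIndex_center {G : Type*} [Group G] [(center G).FiniteIndex]
    (htf : ∀ g : G, g ≠ 1 → ¬IsOfFinOrder g) (a b : G) : a * b = b * a := by
  rw [← commutatorElement_eq_one_iff_mul_comm]
  by_contra hne
  refine htf _ hne (isOfFinOrder_iff_pow_eq_one.mpr
    ⟨_, (FiniteIndex.index_ne_zero (H := center G)).bot_lt, ?_⟩)
  have hcenter : MonoidHom.transferCenterPow G ⁅a, b⁆ = 1 := by
    rw [map_commutatorElement, commutatorElement_eq_one_iff_mul_comm]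
    exact Subtype.ext (mem_center_iff.mp (MonoidHom.transferCenterPow G b).2 _)
  rw [← MonoidHom.transferCenterPow_apply, hcenter, OneMemClass.coe_one]

theorem CommGroup.exists_mulEquiv_multiplicative_finsupp_int {G : Type*} [CommGroup G]
    [Group.FG G] [IsMulTorsionFree G] : ∃ I : Type, Nonempty (G ≃* Multiplicative (I →₀ ℤ)) :=
  have : Module.Finite ℤ (Additive G) := Module.Finite.iff_addGroup_fg.mpr AddGroup.fg_of_group_fg
  ⟨_, ⟨AddEquiv.toMultiplicativeRight (Module.finBasis ℤ (Additive G)).repr.toAddEquiv⟩⟩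

theorem PresentedGroup.fg {α : Type*} [Finite α] (rels : Set (FreeGroup α)) :
    Group.FG (PresentedGroup rels) :=
  Group.fg_iff.mpr ⟨_, closure_range_of rels, Set.finite_range _⟩

namespace RackGroup

variable {X : Type*} {op : X → X → X}

theorem of_mul_of (x y : X) :
    (PresentedGroup.of x * PresentedGroup.of y : RackGroup op)
      = PresentedGroup.of y * PresentedGroup.of (op x y) :=
  PresentedGroup.mk_eq_mk_of_mul_inv_mem ⟨x, y, rfl⟩

variable (hsd : ∀ x y z, op (op x y) z = op (op x z) (op y z))
  (hbij : ∀ y, Function.Bijective (fun x => op x y))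
include hsd hbij

/-- `ι y` acts by the inverse of `· ◃ y`, so that conjugation by `g` sends `ι x` to `ι (g • x)`. -/
noncomputable def toPerm : RackGroup op →* Equiv.Perm X :=
  PresentedGroup.toGroup (f := fun y => (Equiv.ofBijective _ (hbij y))⁻¹) <| by
    rintro _ ⟨x, y, rfl⟩
    have hrel : Equiv.ofBijective _ (hbij (op x y)) * Equiv.ofBijective _ (hbij y)
        = Equiv.ofBijective _ (hbij y) * Equiv.ofBijective _ (hbij x) :=
      Equiv.ext fun a => (hsd a x y).symm
    simp only [map_mul, map_inv, FreeGroup.lift_apply_of, mul_inv_rev, inv_inv]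
    rw [mul_assoc, hrel]
    group

theorem toPerm_of (y : X) :
    toPerm hsd hbij (PresentedGroup.of y) = (Equiv.ofBijective _ (hbij y))⁻¹ :=
  PresentedGroup.toGroup.of _

theorem mul_of_mul_inv (g : RackGroup op) (x : X) :
    g * PresentedGroup.of x * g⁻¹ = PresentedGroup.of (toPerm hsd hbij g x) := by
  have hg : g ∈ closure (Set.range PresentedGroup.of) := by
    rw [PresentedGroup.closure_range_of]; exact mem_top g
  induction hg using closure_induction'' generalizing x with
  | mem _ hy =>
    obtain ⟨y, rfl⟩ := hy
    obtain ⟨z, rfl⟩ := (hbij y).surjective x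
    rw [toPerm_of, ← of_mul_of, mul_inv_cancel_right]
    exact congrArg _ ((Equiv.ofBijective _ (hbij y)).symm_apply_apply z).symm
  | inv_mem _ hy =>
    obtain ⟨y, rfl⟩ := hy
    rw [inv_inv, mul_assoc, of_mul_of, ← mul_assoc, inv_mul_cancel, one_mul, map_inv, toPerm_of,
      inv_inv]
    rfl
  | one => simp
  | mul g h _ _ ihg ihh =>
    rw [mul_inv_rev, ← mul_assoc, mul_assoc g, mul_assoc g, ihh, ihg, map_mul]
    rfl

theorem ker_toPerm_le_center : (toPerm hsd hbij).ker ≤ center (RackGroup op) := by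
  intro g hg
  have hconj : (MulAut.conj g).toMonoidHom = MonoidHom.id _ :=
    PresentedGroup.ext fun x => by
      simpa [MonoidHom.mem_ker.mp hg] using mul_of_mul_inv hsd hbij g x
  refine mem_center_iff.mpr fun h => ?_
  have := DFunLike.congr_fun hconj h
  simp only [MulEquiv.coe_toMonoidHom, MulAut.conj_apply, MonoidHom.id_apply] at this
  exact (mul_inv_eq_iff_eq_mul.mp this).symm

end RackGroup

/-- If the structure group of a finite rack is torsion-free, then it is free
abelian, and consequently `ι x = ι (x ◃ y)` for all `x, y`. -/
theorem rack_group_torsion_free {X : Type*} [Fintype X] (op : X → X → X)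
    (hsd : ∀ x y z, op (op x y) z = op (op x z) (op y z))
    (hbij : ∀ y, Function.Bijective (fun x => op x y))
    (htf : ∀ g : RackGroup op, g ≠ 1 → ¬IsOfFinOrder g) :
    (∃ I : Type, Nonempty (RackGroup op ≃* Multiplicative (I →₀ ℤ))) ∧
      ∀ x y : X, (PresentedGroup.of x : RackGroup op) = PresentedGroup.of (op x y) := by
  have : (center (RackGroup op)).FiniteIndex :=
    finiteIndex_of_le (RackGroup.ker_toPerm_le_center hsd hbij)
  have hcomm := mul_comm_of_finiteIndex_center htf
  let : CommGroup (RackGroup op) := { mul_comm := hcomm }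
  have : IsMulTorsionFree (RackGroup op) := IsMulTorsionFree.of_not_isOfFinOrder htf
  have := PresentedGroup.fg (rackRels op)
  exact ⟨CommGroup.exists_mulEquiv_multiplicative_finsupp_int,
    fun x y => mul_left_cancel ((hcomm _ _).trans (RackGroup.of_mul_of x y))⟩
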